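/- arXiv:math/0605559 — 6 statements merged into one kernel-verified Lean document; each statement's English description precedes it below -/
import Mathlib

section
/- In dimension n = 2, the function w(x₁,x₂) = e^{x₁} is positive on ℝ² and satisfies w·Δw - |∇w|² = 0 everywhere, i.e., λ(A_w) ∈ ∂Γ₁ where A_w = w∇²w - (|∇w|²/2)I. Hence the Liouville property for λ(A_w) ∈ ∂Γ₁ fails in dimension 2 (w is a nonconstant positive smooth solution). -/
open scoped BigOperators
noncomputable section

abbrev Euc (n : ℕ) := EuclideanSpace ℝ (Fin n)

/-- First partial derivative of `f` at `x` in direction `i`. -/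
def pd {n : ℕ} (f : Euc n → ℝ) (x : Euc n) (i : Fin n) : ℝ :=
  fderiv ℝ f x (EuclideanSpace.single i 1)

/-- Second partial derivative (Hessian entry) of `f` at `x`. -/
def hess {n : ℕ} (f : Euc n → ℝ) (x : Euc n) (i j : Fin n) : ℝ :=
  fderiv ℝ (fun y => fderiv ℝ f y (EuclideanSpace.single i 1)) x (EuclideanSpace.single j 1)

section CoordinateFunction

variable {n : ℕ} {φ : ℝ → ℝ} (k : Fin n)

lemma hasFDerivAt_comp_coord {x : Euc n} (hφ : DifferentiableAt ℝ φ (x k)) :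
    HasFDerivAt (fun y : Euc n => φ (y k))
      (deriv φ (x k) • (EuclideanSpace.proj k : Euc n →L[ℝ] ℝ)) x :=
  hφ.hasDerivAt.comp_hasFDerivAt x (EuclideanSpace.proj k : Euc n →L[ℝ] ℝ).hasFDerivAt

lemma fderiv_comp_coord_apply {x : Euc n} (hφ : DifferentiableAt ℝ φ (x k)) (i : Fin n) :
    fderiv ℝ (fun y : Euc n => φ (y k)) x (EuclideanSpace.single i 1)
      = deriv φ (x k) * if k = i then 1 else 0 := by
  simp [(hasFDerivAt_comp_coord k hφ).fderiv, PiLp.single_apply]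

lemma pd_comp_coord {x : Euc n} (hφ : DifferentiableAt ℝ φ (x k)) (i : Fin n) :
    pd (fun y => φ (y k)) x i = deriv φ (x k) * if k = i then 1 else 0 :=
  fderiv_comp_coord_apply k hφ i

lemma hess_comp_coord (hφ : Differentiable ℝ φ) {x : Euc n}
    (hφ' : DifferentiableAt ℝ (deriv φ) (x k)) (i j : Fin n) :
    hess (fun y => φ (y k)) x i j
      = (deriv (deriv φ) (x k) * if k = i then 1 else 0) * if k = j then 1 else 0 := by
  have hpd : (fun y : Euc n => fderiv ℝ (fun y : Euc n => φ (y k)) y (EuclideanSpace.single i 1))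
      = fun y => deriv φ (y k) * if k = i then 1 else 0 :=
    funext fun y => fderiv_comp_coord_apply k (hφ _) i
  rw [hess, hpd, ((hasFDerivAt_comp_coord k hφ').mul_const _).fderiv]
  simp only [FunLike.coe_smul, Pi.smul_apply, PiLp.proj_apply, PiLp.single_apply,
    smul_eq_mul]
  ring

end CoordinateFunction

section ExpCoord

variable {n : ℕ} (k : Fin n)

lemma exp_coord_mul_laplacian_sub_sq_grad (x : Euc n) :
    Real.exp (x k) * ∑ i, hess (fun y => Real.exp (y k)) x i i
      - ∑ i, pd (fun y => Real.exp (y k)) x i ^ 2 = 0 := by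
  simp [hess_comp_coord k Real.differentiable_exp, pd_comp_coord k Real.differentiableAt_exp, sq]

lemma exp_coord_not_constant : ¬ ∃ c : ℝ, ∀ x : Euc n, Real.exp (x k) = c := by
  rintro ⟨c, hc⟩
  have h := (hc 0).trans (hc (EuclideanSpace.single k 1)).symm
  simp only [PiLp.zero_apply, Real.exp_zero, PiLp.single_apply] at h
  exact one_ne_zero (Real.exp_eq_one_iff _ |>.mp h.symm)

end ExpCoord

theorem stmt3 (w : Euc 2 → ℝ) (hw : w = fun x => Real.exp (x 0)) :
    (∀ x, 0 < w x) ∧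
    (∀ x : Euc 2, w x * (∑ i, hess w x i i) - ∑ i, (pd w x i)^2 = 0) ∧
    ¬ (∃ c : ℝ, ∀ x, w x = c) := by
  subst hw
  exact ⟨fun x => Real.exp_pos _, exp_coord_mul_laplacian_sub_sq_grad 0,
    exp_coord_not_constant 0⟩
end
end

section
/- Let B₁ ⊂ ℝ² be the open unit disc, ε > 0, w(x) = (1+ε)e^{-x₁/2} on the closed disc, and v(x) = e^{-x₁|x|⁻²/2} on the closed disc minus the origin. Then w and v are positive, w·Δw - |∇w|² = 0 in B₁, v·Δv - |∇v|² = 0 in B₁∖{0}, and w > v on ∂B₁; yet for sufficiently small ε, inf_{B₁∖{0}}(w - v) < 0. -/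
/-! Writing a positive function as `u = c e^φ`, one has `u Δu - |∇u|² = u² Δφ`, so the degenerate
equation holds exactly where `φ` is harmonic. With `φ = -x₁/2 = Re(-z/2)` and
`φ = -x₁/(2|x|²) = Re(-1/(2z))` both `w` and `v` solve it, and they agree with each other up to the
factor `1 + ε` on the unit circle. Inside the disc, however, `v` blows up along the negative
`x₁`-axis: at `x = (-1/2, 0)` one has `v = e > (1 + ε) e^{1/4} = w` as soon as `1 + ε < e^{3/4}`. -/

open scoped BigOperators
noncomputable section

open InnerProductSpace Laplacian

/-- For positive `u` this is `u² Δ(log u)`. -/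
def logLaplacianNumerator {n : ℕ} (u : Euc n → ℝ) (x : Euc n) : ℝ :=
  u x * ∑ i, hess u x i i - ∑ i, pd u x i ^ 2

theorem fderiv_fderiv_apply_eq_iteratedFDeriv {𝕜 E F : Type*} [NontriviallyNormedField 𝕜]
    [NormedAddCommGroup E] [NormedSpace 𝕜 E] [NormedAddCommGroup F] [NormedSpace 𝕜 F]
    {f : E → F} {x : E} (hf : DifferentiableAt 𝕜 (fderiv 𝕜 f) x) (e e' : E) :
    fderiv 𝕜 (fun y => fderiv 𝕜 f y e) x e' = iteratedFDeriv 𝕜 2 f x ![e', e] := by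
  rw [iteratedFDeriv_two_apply, fderiv_clm_apply hf (differentiableAt_const e)]
  simp

section ConstMulExp

variable {E : Type*} [NormedAddCommGroup E] [NormedSpace ℝ E] (c : ℝ) {φ : E → ℝ} {x : E} (e : E)

theorem fderiv_const_mul_exp_apply (hφ : DifferentiableAt ℝ φ x) :
    fderiv ℝ (fun y => c * Real.exp (φ y)) x e = c * Real.exp (φ x) * fderiv ℝ φ x e := by
  rw [(hφ.hasFDerivAt.exp.const_mul c).fderiv]
  simp [mul_assoc]

theorem fderiv_fderiv_const_mul_exp_apply (hφ : ContDiffAt ℝ 2 φ x) :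
    fderiv ℝ (fun y => fderiv ℝ (fun z => c * Real.exp (φ z)) y e) x e =
      c * Real.exp (φ x) * (fderiv ℝ φ x e ^ 2 + fderiv ℝ (fun y => fderiv ℝ φ y e) x e) := by
  have hφ_near : ∀ᶠ y in nhds x, DifferentiableAt ℝ φ y :=
    (hφ.eventually (by simp)).mono fun y hy => hy.differentiableAt two_ne_zero
  have hdφ : DifferentiableAt ℝ (fun y => fderiv ℝ φ y e) x :=
    ((hφ.fderiv_right (m := 1) le_rfl).differentiableAt one_ne_zero).clm_apply
      (differentiableAt_const e)
  have hfirst : (fun y => fderiv ℝ (fun z => c * Real.exp (φ z)) y e) =ᶠ[nhds x]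
      fun y => c * Real.exp (φ y) * fderiv ℝ φ y e :=
    hφ_near.mono fun y hy => fderiv_const_mul_exp_apply c e hy
  have hprod : HasFDerivAt (fun y => c * Real.exp (φ y) * fderiv ℝ φ y e) _ x :=
    ((hφ.differentiableAt two_ne_zero).hasFDerivAt.exp.const_mul c).mul hdφ.hasFDerivAt
  rw [hfirst.fderiv_eq, hprod.fderiv]
  simp
  ring

end ConstMulExp

theorem logLaplacianNumerator_const_mul_exp {n : ℕ} (c : ℝ) {φ : Euc n → ℝ} {x : Euc n}
    (hφ : ContDiffAt ℝ 2 φ x) :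
    logLaplacianNumerator (fun y => c * Real.exp (φ y)) x =
      (c * Real.exp (φ x)) ^ 2 * ∑ i, hess φ x i i := by
  simp only [logLaplacianNumerator, hess, pd, fderiv_fderiv_const_mul_exp_apply c _ hφ,
    fderiv_const_mul_exp_apply c _ (hφ.differentiableAt two_ne_zero), Finset.mul_sum,
    ← Finset.sum_sub_distrib]
  exact Finset.sum_congr rfl fun i _ => by ring

section OrthonormalBasis

variable {E : Type*} [NormedAddCommGroup E] [InnerProductSpace ℝ E] [FiniteDimensional ℝ E]
  {n : ℕ} (b : OrthonormalBasis (Fin n) ℝ E) {g : E → ℝ} {x : Euc n}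

theorem sum_hess_comp_repr_symm (hg : ContDiffAt ℝ 2 g (b.repr.symm x)) :
    ∑ i, hess (g ∘ b.repr.symm) x i i = Δ g (b.repr.symm x) := by
  have hcomp : ContDiffAt ℝ 2 (g ∘ b.repr.symm) x := hg.comp x b.repr.symm.contDiff.contDiffAt
  have hchain := b.repr.symm.toContinuousLinearEquiv.iteratedFDerivWithin_comp_right g
    uniqueDiffOn_univ (Set.mem_univ (b.repr.symm x)) 2
  simp only [Set.preimage_univ, iteratedFDerivWithin_univ,
    LinearIsometryEquiv.coe_toContinuousLinearEquiv] at hchain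
  rw [laplacian_eq_iteratedFDeriv_orthonormalBasis g b]
  refine Finset.sum_congr rfl fun i _ => ?_
  rw [hess, fderiv_fderiv_apply_eq_iteratedFDeriv
    ((hcomp.fderiv_right (m := 1) le_rfl).differentiableAt one_ne_zero), hchain,
    ContinuousMultilinearMap.compContinuousLinearMap_apply]
  congr 1
  ext j
  fin_cases j <;> simp

theorem InnerProductSpace.HarmonicAt.logLaplacianNumerator_const_mul_exp_comp
    (hg : HarmonicAt g (b.repr.symm x)) (c : ℝ) :
    logLaplacianNumerator (fun y => c * Real.exp (g (b.repr.symm y))) x = 0 := by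
  have key := logLaplacianNumerator_const_mul_exp c (φ := g ∘ b.repr.symm)
    (hg.1.comp x b.repr.symm.contDiff.contDiffAt)
  rw [sum_hess_comp_repr_symm b hg.1, hg.2.eq_of_nhds] at key
  simpa using key

end OrthonormalBasis

theorem Complex.orthonormalBasisOneI_repr_symm_inv_re (y : Euc 2) :
    (Complex.orthonormalBasisOneI.repr.symm y)⁻¹.re = y 0 / ‖y‖ ^ 2 := by
  rw [Complex.inv_re, Complex.normSq_eq_norm_sq, LinearIsometryEquiv.norm_map]
  simp [Complex.orthonormalBasisOneI_repr_symm_apply]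

theorem logLaplacianNumerator_const_mul_exp_neg_half_coord (c : ℝ) (x : Euc 2) :
    logLaplacianNumerator (fun y => c * Real.exp (-(y 0) / 2)) x = 0 := by
  set L := Complex.orthonormalBasisOneI.repr.symm
  have hre : (fun y : Euc 2 => c * Real.exp (-(y 0) / 2)) =
      fun y => c * Real.exp ((-L y / 2).re) := by
    funext y
    simp [L, Complex.orthonormalBasisOneI_repr_symm_apply, neg_div]
  rw [hre]
  exact (by fun_prop : AnalyticAt ℂ (fun z : ℂ => -z / 2) (L x)).harmonicAt_re
    |>.logLaplacianNumerator_const_mul_exp_comp _ _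

theorem logLaplacianNumerator_exp_neg_coord_div_norm_sq {x : Euc 2} (hx : x ≠ 0) :
    logLaplacianNumerator (fun y => Real.exp (-(y 0) / (2 * ‖y‖ ^ 2))) x = 0 := by
  set L := Complex.orthonormalBasisOneI.repr.symm
  have hre : (fun y : Euc 2 => Real.exp (-(y 0) / (2 * ‖y‖ ^ 2))) =
      fun y => 1 * Real.exp ((-(L y)⁻¹ / 2).re) := by
    funext y
    rw [one_mul, Complex.div_ofNat_re, Complex.neg_re,
      Complex.orthonormalBasisOneI_repr_symm_inv_re]
    ring_nf
  have hLx : L x ≠ 0 := (map_ne_zero_iff L L.injective).2 hx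
  rw [hre]
  exact (by fun_prop (disch := exact hLx) : AnalyticAt ℂ (fun z : ℂ => -z⁻¹ / 2) (L x))
    |>.harmonicAt_re |>.logLaplacianNumerator_const_mul_exp_comp _ _

theorem stmt5 :
    (∀ ε : ℝ, 0 < ε →
      ∀ (w v : Euc 2 → ℝ),
        (w = fun x => (1+ε) * Real.exp (-(x 0)/2)) →
        (v = fun x => Real.exp (-(x 0) / (2 * ‖x‖^2))) →
        (∀ x, 0 < w x) ∧ (∀ x : Euc 2, x ≠ 0 → 0 < v x) ∧
        (∀ x ∈ Metric.ball (0:Euc 2) 1,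
          w x * (∑ i, hess w x i i) - ∑ i, (pd w x i)^2 = 0) ∧
        (∀ x ∈ Metric.ball (0:Euc 2) 1 \ {0},
          v x * (∑ i, hess v x i i) - ∑ i, (pd v x i)^2 = 0) ∧
        (∀ x ∈ Metric.sphere (0:Euc 2) 1, v x < w x)) ∧
    (∃ ε₀ > (0:ℝ), ∀ ε : ℝ, 0 < ε → ε < ε₀ →
      ∃ x ∈ Metric.ball (0:Euc 2) 1 \ {0},
        (1+ε) * Real.exp (-(x 0)/2) < Real.exp (-(x 0) / (2 * ‖x‖^2))) := by
  refine ⟨fun ε _ w v hw hv => ?_, ?_⟩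
  · subst hw hv
    refine ⟨fun x => by positivity, fun x _ => Real.exp_pos _,
      fun x _ => logLaplacianNumerator_const_mul_exp_neg_half_coord _ x,
      fun x hx => logLaplacianNumerator_exp_neg_coord_div_norm_sq hx.2, fun x hx => ?_⟩
    rw [mem_sphere_zero_iff_norm] at hx
    simp only [hx]
    norm_num
    exact lt_mul_left (Real.exp_pos _) (by linarith)
  · refine ⟨Real.exp (3 / 4) - 1, sub_pos.2 (Real.one_lt_exp_iff.2 (by norm_num)),
      fun ε _ hε₀ => ⟨EuclideanSpace.single 0 (-1 / 2), ⟨by norm_num, by simp⟩, ?_⟩⟩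
    have hsplit : Real.exp 1 = Real.exp (3 / 4) * Real.exp (1 / 4) := by
      rw [← Real.exp_add]; norm_num
    norm_num [hsplit]
    exact mul_lt_mul_of_pos_right (by linarith) (Real.exp_pos _)
end
end

section
/- Let n ≥ 2, B ⊂ ℝⁿ a ball centered at the origin. Suppose u is C² and positive on the closed ball minus the origin with Δu = 0 in B∖{0}, v is C² on the closed ball with Δv = 0 in B, and u ≥ v on ∂B. Then u ≥ v in the closed ball minus the origin. -/
open scoped BigOperators
noncomputable section

/-!
For `ε > 0` the barrier `ψ y = log ‖y‖² + ‖y‖²` is strictly subharmonic on `ℝⁿ \ {0}` when `n ≥ 2`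
(`Δψ = (2n - 4) / ‖y‖² + 2n`), so `v - u + ε ψ` has no interior maximum on an annulus
`r ≤ ‖y‖ ≤ R`. It is at most `ε ψ(R)` on the outer sphere because `v ≤ u` there, and on the inner
sphere as well once `r` is small, because `v` is bounded above, `u > 0` and `ψ → -∞` at the origin.
Hence `v - u ≤ ε (ψ(R) - ψ)` on the punctured ball, and `ε → 0` gives `v ≤ u`.
-/

open Filter Topology Metric InnerProductSpace Laplacian Module

theorem IsLocalMax.deriv_deriv_nonpos {g : ℝ → ℝ} {t : ℝ} (h : IsLocalMax g t)
    (hc : ContinuousAt g t) : deriv (deriv g) t ≤ 0 := by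
  -- A positive second derivative would make `t` a local minimum as well, so `g` would be
  -- locally constant and its second derivative zero.
  by_contra! hpos
  have hmin := isLocalMin_of_deriv_deriv_pos hpos h.deriv_eq_zero hc
  have hconst : g =ᶠ[𝓝 t] fun _ => g t := by
    filter_upwards [h, hmin] with s hmax hmin using le_antisymm hmax hmin
  rw [hconst.deriv.deriv_eq] at hpos
  simp at hpos

theorem IsLocalMax.iteratedFDeriv_two_nonpos {F : Type*} [NormedAddCommGroup F]
    [NormedSpace ℝ F] {f : F → ℝ} {x : F} (h : IsLocalMax f x) (hf : ContDiffAt ℝ 2 f x) (e : F) :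
    iteratedFDeriv ℝ 2 f x ![e, e] ≤ 0 := by
  have hline : ∀ t : ℝ, HasDerivAt (fun s : ℝ => x + s • e) e t := fun t => by
    simpa using ((hasDerivAt_id t).smul_const e).const_add x
  have hline0 : Tendsto (fun s : ℝ => x + s • e) (𝓝 0) (𝓝 x) := by
    simpa using (hline 0).continuousAt.tendsto
  have hderiv : deriv (fun s : ℝ => f (x + s • e)) =ᶠ[𝓝 0] fun s => fderiv ℝ f (x + s • e) e := by
    filter_upwards [hline0.eventually (hf.eventually (by simp) : ∀ᶠ y in 𝓝 x, ContDiffAt ℝ 2 f y)]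
      with s hs
    exact ((hs.differentiableAt (by simp)).hasFDerivAt.comp_hasDerivAt s (hline s)).deriv
  have hfderiv : HasFDerivAt (fderiv ℝ f) (fderiv ℝ (fderiv ℝ f) x) x :=
    ((hf.fderiv_right (m := 1) le_rfl).differentiableAt one_ne_zero).hasFDerivAt
  have hsecond : HasDerivAt (fun s : ℝ => fderiv ℝ f (x + s • e) e)
      (fderiv ℝ (fderiv ℝ f) x e e) 0 := by
    simpa using
      (hfderiv.comp_hasDerivAt_of_eq 0 (hline 0) (by simp)).clm_apply (hasDerivAt_const 0 e)
  have hmax : IsLocalMax (fun s : ℝ => f (x + s • e)) 0 :=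
    IsLocalMax.comp_continuous (g := fun s : ℝ => x + s • e) (by simpa using h)
      (hline 0).continuousAt
  have hcont : ContinuousAt (fun s : ℝ => f (x + s • e)) 0 :=
    hf.continuousAt.comp_of_eq (hline 0).continuousAt (by simp)
  rw [iteratedFDeriv_two_apply]
  simpa [hderiv.deriv_eq, hsecond.deriv] using hmax.deriv_deriv_nonpos hcont

variable {E : Type*} [NormedAddCommGroup E] [InnerProductSpace ℝ E]

theorem IsLocalMax.laplacian_nonpos [FiniteDimensional ℝ E] {f : E → ℝ} {x : E}
    (h : IsLocalMax f x) (hf : ContDiffAt ℝ 2 f x) : Δ f x ≤ 0 := by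
  rw [laplacian_eq_iteratedFDeriv_stdOrthonormalBasis]
  exact Finset.sum_nonpos fun i _ => h.iteratedFDeriv_two_nonpos hf _

theorem IsCompact.le_of_laplacian_pos [FiniteDimensional ℝ E] {K U : Set E} {w : E → ℝ}
    {M : ℝ} (hK : IsCompact K) (hU : IsOpen U) (hUK : U ⊆ K) (hwK : ContinuousOn w K)
    (hwU : ∀ y ∈ U, ContDiffAt ℝ 2 w y) (hΔ : ∀ y ∈ U, 0 < Δ w y)
    (hM : ∀ y ∈ K \ U, w y ≤ M) {x : E} (hx : x ∈ K) : w x ≤ M := by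
  obtain ⟨z, hzK, hz⟩ := hK.exists_isMaxOn ⟨x, hx⟩ hwK
  by_cases hzU : z ∈ U
  · have := ((hz.on_subset hUK).isLocalMax (hU.mem_nhds hzU)).laplacian_nonpos (hwU z hzU)
    exact absurd (hΔ z hzU) this.not_gt
  · exact (hz hx).trans (hM z ⟨hzK, hzU⟩)

theorem laplacian_comp_norm_sq [FiniteDimensional ℝ E] {φ φ' : ℝ → ℝ} {φ'' : ℝ} {x : E}
    (hφ : ∀ᶠ t in 𝓝 (‖x‖ ^ 2), HasDerivAt φ (φ' t) t) (hφ' : HasDerivAt φ' φ'' (‖x‖ ^ 2)) :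
    Δ (fun y : E => φ (‖y‖ ^ 2)) x = 4 * ‖x‖ ^ 2 * φ'' + 2 * finrank ℝ E * φ' (‖x‖ ^ 2) := by
  let B : E →L[ℝ] E →L[ℝ] ℝ := innerSL ℝ
  have hB : ∀ y z, B y z = ⟪y, z⟫_ℝ := fun _ _ => rfl
  have hnorm : ∀ y : E, HasFDerivAt (fun y : E => ‖y‖ ^ 2) (2 • B y) y :=
    fun y => (hasStrictFDerivAt_norm_sq y).hasFDerivAt
  have hfirst : fderiv ℝ (fun y : E => φ (‖y‖ ^ 2)) =ᶠ[𝓝 x]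
      fun y => φ' (‖y‖ ^ 2) • 2 • B y := by
    have hcont : Tendsto (fun y : E => ‖y‖ ^ 2) (𝓝 x) (𝓝 (‖x‖ ^ 2)) :=
      (hnorm x).continuousAt.tendsto
    filter_upwards [hcont.eventually hφ] with y hy
    exact (hy.comp_hasFDerivAt y (hnorm y)).fderiv
  have hsecond : HasFDerivAt (fun y => φ' (‖y‖ ^ 2) • 2 • B y)
      (φ' (‖x‖ ^ 2) • 2 • B + (φ'' • 2 • B x).smulRight (2 • B x)) x :=
    (hφ'.comp_hasFDerivAt x (hnorm x)).smul (B.hasFDerivAt.const_smul 2)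
  set b := stdOrthonormalBasis ℝ E
  rw [laplacian_eq_iteratedFDeriv_orthonormalBasis _ b]
  simp only [iteratedFDeriv_two_apply, (hsecond.congr_of_eventuallyEq hfirst).fderiv]
  calc ∑ i, _ = ∑ i, (2 * φ' (‖x‖ ^ 2) + 4 * φ'' * ⟪x, b i⟫_ℝ ^ 2) := by
        congr! 1 with i
        simp [hB]
        ring
    _ = _ := by
        rw [Finset.sum_add_distrib, ← Finset.mul_sum _ _ (4 * φ''), b.sum_sq_inner_left]
        simp
        ring

theorem laplacian_log_norm_sq_add_norm_sq [FiniteDimensional ℝ E] {x : E} (hx : x ≠ 0) :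
    Δ (fun y : E => Real.log (‖y‖ ^ 2) + ‖y‖ ^ 2) x
      = (2 * finrank ℝ E - 4) / ‖x‖ ^ 2 + 2 * finrank ℝ E := by
  have hq : ‖x‖ ^ 2 ≠ 0 := by positivity
  have hφ : ∀ᶠ t in 𝓝 (‖x‖ ^ 2), HasDerivAt (fun t => Real.log t + t) (t⁻¹ + 1) t := by
    filter_upwards [eventually_ne_nhds hq] with t ht
    exact (Real.hasDerivAt_log ht).add (hasDerivAt_id t)
  rw [laplacian_comp_norm_sq hφ ((hasDerivAt_inv hq).add_const 1)]
  field_simp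
  ring

theorem laplacian_log_norm_sq_add_norm_sq_pos [FiniteDimensional ℝ E] (hE : 2 ≤ finrank ℝ E)
    {x : E} (hx : x ≠ 0) : 0 < Δ (fun y : E => Real.log (‖y‖ ^ 2) + ‖y‖ ^ 2) x := by
  rw [laplacian_log_norm_sq_add_norm_sq hx]
  have hE' : (2 : ℝ) ≤ finrank ℝ E := by exact_mod_cast hE
  have : 0 ≤ (2 * finrank ℝ E - 4 : ℝ) / ‖x‖ ^ 2 := div_nonneg (by linarith) (by positivity)
  linarith

theorem contDiffAt_log_norm_sq_add_norm_sq {x : E} (hx : x ≠ 0) :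
    ContDiffAt ℝ 2 (fun y : E => Real.log (‖y‖ ^ 2) + ‖y‖ ^ 2) x :=
  ((contDiff_norm_sq ℝ).contDiffAt.log (by positivity)).add (contDiff_norm_sq ℝ).contDiffAt

theorem exists_mem_Ioo_log_sq_add_sq_le (C : ℝ) {ρ : ℝ} (hρ : 0 < ρ) :
    ∃ r ∈ Set.Ioo 0 ρ, Real.log (r ^ 2) + r ^ 2 ≤ C := by
  have hsq : Tendsto (fun r : ℝ => r ^ 2) (𝓝[>] 0) (𝓝[>] 0) :=
    tendsto_nhdsWithin_iff.2
      ⟨by simpa using ((continuous_pow 2).tendsto (0 : ℝ)).mono_left nhdsWithin_le_nhds,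
        eventually_nhdsWithin_of_forall fun r (hr : 0 < r) => pow_pos hr 2⟩
  have hlim : Tendsto (fun r : ℝ => Real.log (r ^ 2) + r ^ 2) (𝓝[>] 0) atBot :=
    (Real.tendsto_log_nhdsGT_zero.comp hsq).atBot_add (hsq.mono_right nhdsWithin_le_nhds)
  exact (Filter.Eventually.and (Ioo_mem_nhdsGT hρ) (tendsto_atBot.1 hlim C)).exists

theorem norm_eq_or_norm_eq_of_mem_annulus_sdiff {F : Type*} [SeminormedAddCommGroup F]
    {r R : ℝ} {y : F} (hy : y ∈ (closedBall 0 R \ ball 0 r) \ (ball 0 R \ closedBall 0 r)) :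
    ‖y‖ = r ∨ ‖y‖ = R := by
  simp only [Set.mem_sdiff, mem_closedBall_zero_iff, mem_ball_zero_iff, not_lt, not_and,
    not_le] at hy
  obtain ⟨⟨hyR, hyr⟩, hyU⟩ := hy
  rcases hyR.lt_or_eq with hyR | hyR
  · exact Or.inl (le_antisymm (hyU hyR) hyr)
  · exact Or.inr hyR

section PuncturedBall

variable [FiniteDimensional ℝ E] {R M : ℝ} {w : E → ℝ}

theorem le_mul_log_norm_sq_add_norm_sq_of_laplacian_nonneg (hE : 2 ≤ finrank ℝ E)
    (hw : ContDiffOn ℝ 2 w (closedBall 0 R \ {0})) (hΔ : ∀ y ∈ ball (0 : E) R \ {0}, 0 ≤ Δ w y)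
    (hM : ∀ y ∈ closedBall (0 : E) R \ {0}, w y ≤ M) (hsphere : ∀ y ∈ sphere (0 : E) R, w y ≤ 0)
    {ε : ℝ} (hε : 0 < ε) {x : E} (hx : x ∈ closedBall (0 : E) R \ {0}) :
    w x ≤ ε * (Real.log (R ^ 2) + R ^ 2 - (Real.log (‖x‖ ^ 2) + ‖x‖ ^ 2)) := by
  set ψ : E → ℝ := fun y => Real.log (‖y‖ ^ 2) + ‖y‖ ^ 2
  -- An inner radius at which `ε ψ` is so negative that it absorbs the bound `M` on `w`.
  obtain ⟨r, ⟨hr0, hrx⟩, hr⟩ := exists_mem_Ioo_log_sq_add_sq_le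
    (Real.log (R ^ 2) + R ^ 2 - M / ε) (norm_pos_iff.2 hx.2)
  have hKsub : closedBall (0 : E) R \ ball 0 r ⊆ closedBall 0 R \ {0} :=
    Set.sdiff_subset_sdiff_right (Set.singleton_subset_iff.2 (mem_ball_self hr0))
  have hUsub : ball (0 : E) R \ closedBall 0 r ⊆ ball 0 R \ {0} :=
    Set.sdiff_subset_sdiff_right (Set.singleton_subset_iff.2 (mem_closedBall_self hr0.le))
  have hU : IsOpen (ball (0 : E) R \ closedBall 0 r) := isOpen_ball.sdiff isClosed_closedBall
  have hψ : ∀ y ∈ closedBall (0 : E) R \ ball 0 r, ContDiffAt ℝ 2 (ε • ψ) y := fun y hy =>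
    (contDiffAt_log_norm_sq_add_norm_sq (hKsub hy).2).const_smul ε
  have hUK : ball (0 : E) R \ closedBall 0 r ⊆ closedBall 0 R \ ball 0 r :=
    Set.sdiff_subset_sdiff ball_subset_closedBall ball_subset_closedBall
  have hwU : ∀ y ∈ ball (0 : E) R \ closedBall 0 r, ContDiffAt ℝ 2 w y := fun y hy =>
    hw.contDiffAt (Filter.mem_of_superset (hU.mem_nhds hy)
      (hUsub.trans (Set.sdiff_subset_sdiff_left ball_subset_closedBall)))
  have hmax := ((isCompact_closedBall (0 : E) R).diff isOpen_ball).le_of_laplacian_pos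
    (w := w + ε • ψ) (M := ε * (Real.log (R ^ 2) + R ^ 2)) hU hUK
    ((hw.continuousOn.mono hKsub).add fun y hy => (hψ y hy).continuousAt.continuousWithinAt)
    (fun y hy => (hwU y hy).add (hψ y (hUK hy)))
    (fun y hy => by
      rw [(hwU y hy).laplacian_add (hψ y (hUK hy)),
        laplacian_smul ε (contDiffAt_log_norm_sq_add_norm_sq (hUsub hy).2), smul_eq_mul]
      nlinarith [hΔ y (hUsub hy), laplacian_log_norm_sq_add_norm_sq_pos hE (hUsub hy).2])
    (fun y hy => by
      simp only [Pi.add_apply, Pi.smul_apply, smul_eq_mul, ψ]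
      rcases norm_eq_or_norm_eq_of_mem_annulus_sdiff hy with hyr | hyR
      · have hεr := mul_le_mul_of_nonneg_left hr hε.le
        rw [mul_sub, mul_div_cancel₀ _ hε.ne'] at hεr
        rw [hyr]
        linarith [hM y (hKsub hy.1)]
      · rw [hyR]
        linarith [hsphere y (mem_sphere_zero_iff_norm.2 hyR)])
    (Set.mem_sdiff_of_mem hx.1 (by simpa using hrx.le))
  simp only [Pi.add_apply, Pi.smul_apply, smul_eq_mul, ψ] at hmax
  linarith

theorem nonpos_of_laplacian_nonneg_of_bddAbove (hE : 2 ≤ finrank ℝ E)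
    (hw : ContDiffOn ℝ 2 w (closedBall 0 R \ {0})) (hΔ : ∀ y ∈ ball (0 : E) R \ {0}, 0 ≤ Δ w y)
    (hM : ∀ y ∈ closedBall (0 : E) R \ {0}, w y ≤ M) (hsphere : ∀ y ∈ sphere (0 : E) R, w y ≤ 0)
    {x : E} (hx : x ∈ closedBall (0 : E) R \ {0}) : w x ≤ 0 := by
  set C := Real.log (R ^ 2) + R ^ 2 - (Real.log (‖x‖ ^ 2) + ‖x‖ ^ 2)
  have hlim : Tendsto (fun ε => ε * C) (𝓝[>] 0) (𝓝 0) := by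
    simpa using ((continuous_mul_const C).tendsto 0).mono_left nhdsWithin_le_nhds
  exact ge_of_tendsto hlim (eventually_nhdsWithin_of_forall fun ε hε =>
    le_mul_log_norm_sq_add_norm_sq_of_laplacian_nonneg hE hw hΔ hM hsphere hε hx)

end PuncturedBall

theorem laplacian_eq_sum_hess {n : ℕ} {f : Euc n → ℝ} {x : Euc n} (hf : ContDiffAt ℝ 2 f x) :
    Δ f x = ∑ i, hess f x i i := by
  have hdiff : DifferentiableAt ℝ (fderiv ℝ f) x :=
    (hf.fderiv_right (m := 1) le_rfl).differentiableAt one_ne_zero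
  rw [laplacian_eq_iteratedFDeriv_orthonormalBasis f (EuclideanSpace.basisFun (Fin n) ℝ)]
  refine Finset.sum_congr rfl fun i _ => ?_
  rw [iteratedFDeriv_two_apply, hess, fderiv_clm_apply hdiff (differentiableAt_const _)]
  simp

theorem stmt6_general (n : ℕ) (hn : 2 ≤ n) (R : ℝ)
    (u v : Euc n → ℝ)
    (hu : ContDiffOn ℝ 2 u (Metric.closedBall 0 R \ {0}))
    (hupos : ∀ x ∈ Metric.closedBall (0:Euc n) R \ {0}, 0 < u x)
    (huh : ∀ x ∈ Metric.ball (0:Euc n) R \ {0}, ∑ i, hess u x i i = 0)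
    (hv : ContDiffOn ℝ 2 v (Metric.closedBall 0 R))
    (hvh : ∀ x ∈ Metric.ball (0:Euc n) R, ∑ i, hess v x i i = 0)
    (hbd : ∀ x ∈ Metric.sphere (0:Euc n) R, v x ≤ u x) :
    ∀ x ∈ Metric.closedBall (0:Euc n) R \ {0}, v x ≤ u x := by
  obtain ⟨M, hM⟩ := (isCompact_closedBall (0 : Euc n) R).bddAbove_image hv.continuousOn
  have hsmooth : ∀ y ∈ ball (0 : Euc n) R \ {0}, ContDiffAt ℝ 2 u y ∧ ContDiffAt ℝ 2 v y :=
    fun y hy => ⟨hu.contDiffAt (Filter.mem_of_superset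
        ((isOpen_ball.sdiff isClosed_singleton).mem_nhds hy)
        (Set.sdiff_subset_sdiff_left ball_subset_closedBall)),
      hv.contDiffAt (Filter.mem_of_superset (isOpen_ball.mem_nhds hy.1) ball_subset_closedBall)⟩
  intro x hx
  have := nonpos_of_laplacian_nonneg_of_bddAbove (w := v - u) (M := M)
    (by rwa [finrank_euclideanSpace_fin]) ((hv.mono Set.sdiff_subset).sub hu)
    (fun y hy => by
      rw [(hsmooth y hy).2.laplacian_sub (hsmooth y hy).1, laplacian_eq_sum_hess (hsmooth y hy).2,
        laplacian_eq_sum_hess (hsmooth y hy).1, huh y hy, hvh y hy.1, sub_zero])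
    (fun y hy => show v y - u y ≤ M by linarith [hM (Set.mem_image_of_mem v hy.1), hupos y hy])
    (fun y hy => sub_nonpos.2 (hbd y hy)) hx
  exact sub_nonpos.1 this

theorem stmt6 (n : ℕ) (hn : 2 ≤ n) (R : ℝ) (hR : 0 < R)
    (u v : Euc n → ℝ)
    (hu : ContDiffOn ℝ 2 u (Metric.closedBall 0 R \ {0}))
    (hupos : ∀ x ∈ Metric.closedBall (0:Euc n) R \ {0}, 0 < u x)
    (huh : ∀ x ∈ Metric.ball (0:Euc n) R \ {0}, ∑ i, hess u x i i = 0)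
    (hv : ContDiffOn ℝ 2 v (Metric.closedBall 0 R))
    (hvh : ∀ x ∈ Metric.ball (0:Euc n) R, ∑ i, hess v x i i = 0)
    (hbd : ∀ x ∈ Metric.sphere (0:Euc n) R, v x ≤ u x) :
    ∀ x ∈ Metric.closedBall (0:Euc n) R \ {0}, v x ≤ u x :=
  stmt6_general n hn R u v hu hupos huh hv hvh hbd
end
end

section
/- Let n ≥ 1 and u be a continuous positive function on ℝⁿ such that for every x ∈ ℝⁿ, every λ > 0, and every y with |y - x| ≥ λ, one has (λ/|y-x|)^{n-2}·u(x + λ²(y-x)/|y-x|²) ≤ u(y). Then u is constant. -/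
/-! Given `y ≠ z` and `0 < r < 1`, put the centre `x` on the ray from `y` through `z`, beyond `z`,
at the point where the sphere about `x` of radius `λ = r ‖y - x‖` inverts `y` onto `z`.
The hypothesis then gives `r ^ (n - 2) u(z) ≤ u(y)`, and letting `r → 1` (the centre escapes to
infinity) yields `u(z) ≤ u(y)`. -/

open scoped BigOperators
noncomputable section

open Filter Topology Set

section

variable {E : Type*} [NormedAddCommGroup E] [NormedSpace ℝ E]

/-- The Kelvin transform `u_{x,λ}` with weight exponent `p` (`p = n - 2` in `ℝⁿ`). -/
def kelvinTransform (p : ℝ) (u : E → ℝ) (x : E) (lam : ℝ) (y : E) : ℝ :=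
  (lam / ‖y - x‖) ^ p * u (x + (lam ^ 2 / ‖y - x‖ ^ 2) • (y - x))

theorem kelvinTransform_eq_rpow_mul {x y z : E} {r : ℝ} (hx : (1 - r ^ 2) • (x - y) = z - y)
    (hxy : x ≠ y) (p : ℝ) (u : E → ℝ) :
    kelvinTransform p u x (r * ‖y - x‖) y = r ^ p * u z := by
  have hyx : ‖y - x‖ ≠ 0 := norm_ne_zero_iff.mpr (sub_ne_zero.mpr hxy.symm)
  have hinv : x + r ^ 2 • (y - x) = z := by
    calc x + r ^ 2 • (y - x) = y + (1 - r ^ 2) • (x - y) := by module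
      _ = z := by rw [hx]; abel
  rw [kelvinTransform, mul_div_cancel_right₀ r hyx, mul_pow,
    mul_div_cancel_right₀ _ (pow_ne_zero 2 hyx), hinv]

theorem rpow_mul_le_of_kelvinTransform_le {p : ℝ} {u : E → ℝ}
    (h : ∀ x lam y, 0 < lam → lam ≤ ‖y - x‖ → kelvinTransform p u x lam y ≤ u y)
    {y z : E} (hyz : y ≠ z) {r : ℝ} (hr0 : 0 < r) (hr1 : r < 1) : r ^ p * u z ≤ u y := by
  set x := y + (1 - r ^ 2)⁻¹ • (z - y)
  have hx : (1 - r ^ 2) • (x - y) = z - y := by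
    have hr2 : 1 - r ^ 2 ≠ 0 := by nlinarith
    simp [x, smul_smul, hr2]
  have hxy : x ≠ y := by
    intro hxy
    rw [hxy, sub_self, smul_zero, eq_comm, sub_eq_zero] at hx
    exact hyz hx.symm
  have hyx : 0 < ‖y - x‖ := norm_pos_iff.mpr (sub_ne_zero.mpr hxy.symm)
  rw [← kelvinTransform_eq_rpow_mul hx hxy]
  exact h x _ y (mul_pos hr0 hyx) (mul_le_of_le_one_left hyx.le hr1.le)

theorem le_of_kelvinTransform_le {p : ℝ} {u : E → ℝ}
    (h : ∀ x lam y, 0 < lam → lam ≤ ‖y - x‖ → kelvinTransform p u x lam y ≤ u y)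
    (y z : E) : u z ≤ u y := by
  rcases eq_or_ne y z with rfl | hyz
  · rfl
  have hlim : Tendsto (fun r : ℝ => r ^ p * u z) (𝓝[<] 1) (𝓝 (u z)) := by
    have := ((Real.continuousAt_rpow_const 1 p (Or.inl one_ne_zero)).tendsto.mul_const (u z))
    simpa using this.mono_left nhdsWithin_le_nhds
  refine le_of_tendsto hlim ?_
  filter_upwards [Ioo_mem_nhdsLT zero_lt_one] with r hr
  exact rpow_mul_le_of_kelvinTransform_le h hyz hr.1 hr.2

end

theorem stmt8_general (n : ℕ) (u : Euc n → ℝ)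
    (h : ∀ (x : Euc n) (lam : ℝ) (y : Euc n), 0 < lam → lam ≤ ‖y - x‖ →
      (lam / ‖y - x‖) ^ ((n:ℝ) - 2) * u (x + (lam^2 / ‖y - x‖^2) • (y - x)) ≤ u y) :
    ∀ y z : Euc n, u y = u z :=
  fun y z => le_antisymm (le_of_kelvinTransform_le h z y) (le_of_kelvinTransform_le h y z)

theorem stmt8 (n : ℕ) (hn : 1 ≤ n) (u : Euc n → ℝ)
    (hc : Continuous u) (hpos : ∀ x, 0 < u x)
    (h : ∀ (x : Euc n) (lam : ℝ) (y : Euc n), 0 < lam → lam ≤ ‖y - x‖ →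
      (lam / ‖y - x‖) ^ ((n:ℝ) - 2) * u (x + (lam^2 / ‖y - x‖^2) • (y - x)) ≤ u y) :
    ∀ y z : Euc n, u y = u z :=
  stmt8_general n u h
end
end

section
/- Let n ≥ 3 and u be a continuous positive function on ℝⁿ∖{0} such that for every x ≠ 0, every 0 < λ < |x|, and every y ≠ 0 with |y - x| ≥ λ, one has (λ/|y-x|)^{n-2}·u(x + λ²(y-x)/|y-x|²) ≤ u(y). Then u is radially symmetric about the origin, and the resulting radial function is non-increasing in r. -/
/-!
Inversion in the sphere of radius `λ` about `x` sends `z` to `x + λ²/|z - x|² (z - x)`. If `y` lies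
on the segment from `x` to `z` and `λ² = |y - x| |z - x|`, it sends `z` to `y`, and the hypothesis
reads `(|y - x| / |z - x|)^{(n-2)/2} u(y) ≤ u(z)`. Sending the centre `x` to infinity along the line
through `y` and `z` makes the factor tend to `1`, so `u(y) ≤ u(z)`. For `|y| = |z|` the centres
`y + s (y - z)` are admissible (`λ < |x|` by Pythagoras), which gives radial symmetry in both
directions; for `z` on the ray through `y` beyond it, centres far out on the ray give `u(z) ≤ u(y)`.
-/

open scoped BigOperators
noncomputable section

open Filter Topology

lemma tendsto_sub_div_sub_atTop_nhds_one (a b : ℝ) :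
    Tendsto (fun s : ℝ => (s - a) / (s - b)) atTop (𝓝 1) := by
  have hsmall : Tendsto (fun s : ℝ => (b - a) / (s - b)) atTop (𝓝 0) :=
    tendsto_const_nhds.div_atTop (tendsto_atTop_add_const_right _ (-b) tendsto_id)
  have hone : Tendsto (fun s : ℝ => 1 + (b - a) / (s - b)) atTop (𝓝 1) := by
    simpa using hsmall.const_add 1
  refine hone.congr' ?_
  filter_upwards [eventually_gt_atTop b] with s hs
  have : s - b ≠ 0 := sub_ne_zero.mpr hs.ne'
  field_simp
  ring

lemma le_of_eventually_sqrt_rpow_mul_le {t : ℝ → ℝ} (ht : Tendsto t atTop (𝓝 1)) {a A B : ℝ}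
    (h : ∀ᶠ s in atTop, √(t s) ^ a * A ≤ B) : A ≤ B := by
  have hcoef : Tendsto (fun s => √(t s) ^ a * A) atTop (𝓝 A) := by
    simpa using (((Real.continuous_sqrt.tendsto 1).comp ht).rpow_const
      (Or.inl (by simp))).mul_const A
  exact le_of_tendsto hcoef h

/-- `u_{x,λ} ≤ u` on `{y ≠ 0, |y - x| ≥ λ}` for all `x ≠ 0` and `0 < λ < |x|`, where
`u_{x,λ}(y) = (λ/|y-x|)^a u(x + λ²(y-x)/|y-x|²)`. -/
def DominatesKelvinTransforms {E : Type*} [NormedAddCommGroup E] [NormedSpace ℝ E] (a : ℝ)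
    (u : E → ℝ) : Prop :=
  ∀ x : E, x ≠ 0 → ∀ lam : ℝ, 0 < lam → lam < ‖x‖ →
    ∀ y : E, y ≠ 0 → lam ≤ ‖y - x‖ →
      (lam / ‖y - x‖) ^ a * u (x + (lam ^ 2 / ‖y - x‖ ^ 2) • (y - x)) ≤ u y

namespace DominatesKelvinTransforms

section NormedSpace

variable {E : Type*} [NormedAddCommGroup E] [NormedSpace ℝ E] {a : ℝ} {u : E → ℝ}

lemma sqrt_rpow_mul_le (hu : DominatesKelvinTransforms a u) {x z : E} {t : ℝ} (hz : z ≠ 0)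
    (hzx : z ≠ x) (ht₀ : 0 < t) (ht₁ : t ≤ 1) (hx : t * ‖z - x‖ ^ 2 < ‖x‖ ^ 2) :
    √t ^ a * u (x + t • (z - x)) ≤ u z := by
  have hd : 0 < ‖z - x‖ := norm_pos_iff.mpr (sub_ne_zero.mpr hzx)
  set lam := √t * ‖z - x‖ with hlam
  have hlam_sq : lam ^ 2 = t * ‖z - x‖ ^ 2 := by rw [hlam, mul_pow, Real.sq_sqrt ht₀.le]
  have hx0 : x ≠ 0 := by
    rintro rfl
    have := hx.trans_le' (by positivity : 0 ≤ t * ‖z - 0‖ ^ 2)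
    simp at this
  have hlam_lt : lam < ‖x‖ := by
    apply lt_of_pow_lt_pow_left₀ 2 (norm_nonneg x)
    rwa [hlam_sq]
  have hlam_le : lam ≤ ‖z - x‖ :=
    mul_le_of_le_one_left hd.le (Real.sqrt_le_one.mpr ht₁)
  have hratio : lam / ‖z - x‖ = √t := by rw [hlam]; field_simp
  have hcoef : lam ^ 2 / ‖z - x‖ ^ 2 = t := by rw [hlam_sq]; field_simp
  simpa only [hratio, hcoef] using
    hu x hx0 lam (by positivity) hlam_lt z hz hlam_le

lemma smul_le (hu : DominatesKelvinTransforms a u) {y : E} (hy : y ≠ 0) {c : ℝ} (hc : 1 ≤ c) :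
    u (c • y) ≤ u y := by
  refine le_of_eventually_sqrt_rpow_mul_le (a := a) (tendsto_sub_div_sub_atTop_nhds_one c 1) ?_
  filter_upwards [eventually_gt_atTop c] with R hR
  have hR1 : 0 < R - 1 := by linarith
  have hyR : y - R • y = (1 - R) • y := by module
  have himg : R • y + ((R - c) / (R - 1)) • (y - R • y) = c • y := by
    rw [hyR, smul_smul, ← add_smul]
    congr 1
    field_simp
    ring
  have hy' : 0 < ‖y‖ := norm_pos_iff.mpr hy
  have hdist : ‖y - R • y‖ = (R - 1) * ‖y‖ := by
    rw [hyR, norm_smul, Real.norm_eq_abs, abs_of_nonpos (by linarith)]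
    ring
  have hx : (R - c) / (R - 1) * ‖y - R • y‖ ^ 2 < ‖R • y‖ ^ 2 := by
    rw [hdist, norm_smul, Real.norm_eq_abs, abs_of_pos (by linarith)]
    field_simp
    nlinarith [mul_pos hy' hy']
  simpa only [himg] using
    hu.sqrt_rpow_mul_le (x := R • y) hy
      (sub_ne_zero.mp (norm_pos_iff.mp (by rw [hdist]; positivity)))
      (div_pos (by linarith) hR1) ((div_le_one hR1).mpr (by linarith)) hx

end NormedSpace

variable {E : Type*} [NormedAddCommGroup E] [InnerProductSpace ℝ E] {a : ℝ} {u : E → ℝ}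

lemma le_of_norm_eq (hu : DominatesKelvinTransforms a u) {y z : E} (hy : y ≠ 0) (hz : z ≠ 0)
    (hyz : ‖y‖ = ‖z‖) : u y ≤ u z := by
  rcases eq_or_ne y z with rfl | hne
  · exact le_rfl
  have ht : Tendsto (fun s : ℝ => s / (s + 1)) atTop (𝓝 1) := by
    simpa using tendsto_sub_div_sub_atTop_nhds_one 0 (-1)
  refine le_of_eventually_sqrt_rpow_mul_le (a := a) ht ?_
  filter_upwards [eventually_gt_atTop 0] with s hs
  have hd : 0 < ‖y - z‖ := norm_pos_iff.mpr (sub_ne_zero.mpr hne)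
  set x := y + s • (y - z) with hx_def
  have hzx : z - x = (-(s + 1)) • (y - z) := by module
  have hdist : ‖z - x‖ = (s + 1) * ‖y - z‖ := by
    rw [hzx, norm_smul, Real.norm_eq_abs, abs_neg, abs_of_pos (by linarith)]
  have himg : x + (s / (s + 1)) • (z - x) = y := by
    have : (s / (s + 1)) • (z - x) = (-s) • (y - z) := by
      rw [hzx, smul_smul]
      congr 1
      field_simp
    rw [this, hx_def]
    module
  have hx : ‖x‖ ^ 2 = ‖y‖ ^ 2 + s * (s + 1) * ‖y - z‖ ^ 2 := by
    have hinner : 2 * inner ℝ y (y - z) = ‖y - z‖ ^ 2 := by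
      rw [inner_sub_right, real_inner_self_eq_norm_sq, norm_sub_sq_real, hyz]
      ring
    rw [hx_def, norm_add_sq_real, inner_smul_right, norm_smul, mul_pow, Real.norm_eq_abs, sq_abs]
    linear_combination s * hinner
  have hlt : s / (s + 1) * ‖z - x‖ ^ 2 < ‖x‖ ^ 2 := by
    rw [hdist, hx]
    field_simp
    nlinarith [norm_pos_iff.mpr hy]
  simpa only [himg] using
    hu.sqrt_rpow_mul_le hz (sub_ne_zero.mp (norm_pos_iff.mp (by rw [hdist]; positivity)))
      (by positivity) ((div_le_one (by linarith)).mpr (by linarith)) hlt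

lemma eq_of_norm_eq (hu : DominatesKelvinTransforms a u) {y z : E} (hy : y ≠ 0) (hz : z ≠ 0)
    (hyz : ‖y‖ = ‖z‖) : u y = u z :=
  le_antisymm (hu.le_of_norm_eq hy hz hyz) (hu.le_of_norm_eq hz hy hyz.symm)

lemma le_of_norm_le (hu : DominatesKelvinTransforms a u) {y z : E} (hy : y ≠ 0) (hz : z ≠ 0)
    (hyz : ‖y‖ ≤ ‖z‖) : u z ≤ u y := by
  have hy' : 0 < ‖y‖ := norm_pos_iff.mpr hy
  calc u z = u ((‖z‖ / ‖y‖) • y) := by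
        refine hu.eq_of_norm_eq hz (smul_ne_zero (by positivity) hy) ?_
        rw [norm_smul, Real.norm_eq_abs, abs_of_nonneg (by positivity), div_mul_cancel₀ _ hy'.ne']
    _ ≤ u y := hu.smul_le hy ((one_le_div hy').mpr hyz)

end DominatesKelvinTransforms

theorem stmt9_general (n : ℕ) (u : Euc n → ℝ)
    (h : ∀ x : Euc n, x ≠ 0 → ∀ lam : ℝ, 0 < lam → lam < ‖x‖ →
      ∀ y : Euc n, y ≠ 0 → lam ≤ ‖y - x‖ →
      (lam / ‖y - x‖) ^ ((n:ℝ) - 2) * u (x + (lam^2 / ‖y - x‖^2) • (y - x)) ≤ u y) :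
    (∀ y z : Euc n, y ≠ 0 → z ≠ 0 → ‖y‖ = ‖z‖ → u y = u z) ∧
    (∀ y z : Euc n, y ≠ 0 → z ≠ 0 → ‖y‖ ≤ ‖z‖ → u z ≤ u y) := by
  have hu : DominatesKelvinTransforms ((n : ℝ) - 2) u := h
  exact ⟨fun _ _ hy hz hyz => hu.eq_of_norm_eq hy hz hyz,
    fun _ _ hy hz hyz => hu.le_of_norm_le hy hz hyz⟩

theorem stmt9 (n : ℕ) (hn : 3 ≤ n) (u : Euc n → ℝ)
    (hc : ContinuousOn u {(0:Euc n)}ᶜ) (hpos : ∀ x : Euc n, x ≠ 0 → 0 < u x)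
    (h : ∀ x : Euc n, x ≠ 0 → ∀ lam : ℝ, 0 < lam → lam < ‖x‖ →
      ∀ y : Euc n, y ≠ 0 → lam ≤ ‖y - x‖ →
      (lam / ‖y - x‖) ^ ((n:ℝ) - 2) * u (x + (lam^2 / ‖y - x‖^2) • (y - x)) ≤ u y) :
    (∀ y z : Euc n, y ≠ 0 → z ≠ 0 → ‖y‖ = ‖z‖ → u y = u z) ∧
    (∀ y z : Euc n, y ≠ 0 → z ≠ 0 → ‖y‖ ≤ ‖z‖ → u z ≤ u y) :=
  stmt9_general n u h
end
end

section
/- Let n ≥ 3 and Ω ⊆ ℝⁿ open. A positive continuous function u on Ω is a viscosity subsolution of λ(A^u) ∈ ∂Γ (in the sense that test functions φ touching u from above at x₀ satisfy λ(A^φ(x₀)) ∈ ℝⁿ∖Γ) if and only if w := u^(-2/(n-2)) is a viscosity supersolution of λ(A_w) ∈ ∂Γ (test functions ψ touching w from below at x₀ satisfy λ(A_ψ(x₀)) ∈ ℝⁿ∖Γ). -/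
open scoped BigOperators
noncomputable section

/-- The conformal Hessian $A_w$ as a matrix. -/
def AW (n : ℕ) (φ : Euc n → ℝ) (x : Euc n) : Matrix (Fin n) (Fin n) ℝ :=
  Matrix.of fun i j =>
    φ x * hess φ x i j - ((∑ k, (pd φ x k)^2)/2) * (if i = j then 1 else 0)

/-- The conformal Hessian $A^u$ as a matrix. -/
def AU (n : ℕ) (φ : Euc n → ℝ) (x : Euc n) : Matrix (Fin n) (Fin n) ℝ :=
  Matrix.of fun i j =>
    -(2/((n:ℝ)-2)) * φ x ^ (-((n:ℝ)+2)/((n:ℝ)-2)) * hess φ x i j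
    + (2*(n:ℝ)/((n:ℝ)-2)^2) * φ x ^ (-(2*(n:ℝ))/((n:ℝ)-2)) * pd φ x i * pd φ x j
    - (2/((n:ℝ)-2)^2) * φ x ^ (-(2*(n:ℝ))/((n:ℝ)-2)) * (∑ k, (pd φ x k)^2)
        * (if i = j then 1 else 0)

/-!
Since `A^φ = A_{φ ^ (-2/(n-2))}` and `t ↦ t ^ (-2/(n-2))` is a decreasing bijection of `(0, ∞)`
with inverse `t ↦ t ^ (-(n-2)/2)`, a `C²` function touching `u` from above at `x₀` becomes,
after this change of variables, a function touching `w` from below at `x₀` with the same conformal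
Hessian there, and conversely. The test functions are only positive near `x₀`, so they are first
modified away from `x₀` to be positive everywhere, which changes neither the touching nor the
derivatives at `x₀`.
-/

open Filter Topology

section Congr

variable {n : ℕ} {f g : Euc n → ℝ} {x : Euc n}

lemma pd_congr (h : f =ᶠ[𝓝 x] g) : pd f x = pd g x := by
  funext i
  rw [pd, pd, h.fderiv_eq]

lemma hess_congr (h : f =ᶠ[𝓝 x] g) : hess f x = hess g x := by
  funext i j
  have hpd : (fun y => fderiv ℝ f y (EuclideanSpace.single i 1))
      =ᶠ[𝓝 x] fun y => fderiv ℝ g y (EuclideanSpace.single i 1) := by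
    filter_upwards [h.fderiv (𝕜 := ℝ)] with y hy
    rw [hy]
  rw [hess, hess, hpd.fderiv_eq]

lemma AU_congr (h : f =ᶠ[𝓝 x] g) : AU n f x = AU n g x := by
  rw [AU, AU, pd_congr h, hess_congr h, h.self_of_nhds]

end Congr

section Rpow

variable {n : ℕ} {ψ : Euc n → ℝ} {x : Euc n}

lemma pd_rpow (hψ : DifferentiableAt ℝ ψ x) (hx : ψ x ≠ 0) (p : ℝ) (i : Fin n) :
    pd (fun y => ψ y ^ p) x i = p * ψ x ^ (p - 1) * pd ψ x i := by
  rw [pd, (hψ.hasFDerivAt.rpow_const (Or.inl hx)).fderiv]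
  simp [pd, mul_assoc]

lemma hess_rpow (hψ : ContDiff ℝ 2 ψ) (hx : 0 < ψ x) (p : ℝ) (i j : Fin n) :
    hess (fun y => ψ y ^ p) x i j
      = p * (p - 1) * ψ x ^ (p - 2) * pd ψ x i * pd ψ x j + p * ψ x ^ (p - 1) * hess ψ x i j := by
  have hdiff : Differentiable ℝ ψ := hψ.differentiable two_ne_zero
  have hpd : (fun y => pd (fun z => ψ z ^ p) y i)
      =ᶠ[𝓝 x] fun y => p * ψ y ^ (p - 1) * pd ψ y i := by
    filter_upwards [hψ.continuous.continuousAt.eventually (eventually_gt_nhds hx)] with y hy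
    exact pd_rpow (hdiff y) hy.ne' p i
  have hcoeff : HasFDerivAt (fun y => p * ψ y ^ (p - 1))
      (p • (((p - 1) * ψ x ^ (p - 1 - 1)) • fderiv ℝ ψ x)) x :=
    ((hdiff x).hasFDerivAt.rpow_const (Or.inl hx.ne')).const_mul p
  have hpdψ : DifferentiableAt ℝ (fun y => pd ψ y i) x :=
    (((hψ.fderiv_right le_rfl).clm_apply contDiff_const).differentiable one_ne_zero) x
  have hprod : HasFDerivAt (fun y => p * ψ y ^ (p - 1) * pd ψ y i) _ x :=
    hcoeff.mul hpdψ.hasFDerivAt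
  unfold hess
  rw [show (fun y => fderiv ℝ (fun z => ψ z ^ p) y (EuclideanSpace.single i 1))
      = fun y => pd (fun z => ψ z ^ p) y i from rfl, hpd.fderiv_eq, hprod.fderiv,
    show p - 1 - 1 = p - 2 by ring]
  simp only [add_apply, smul_apply, smul_eq_mul, pd]
  ring

lemma sum_sq_pd_rpow (hψ : DifferentiableAt ℝ ψ x) (hx : ψ x ≠ 0) (p : ℝ) :
    ∑ k, pd (fun y => ψ y ^ p) x k ^ 2 = (p * ψ x ^ (p - 1)) ^ 2 * ∑ k, pd ψ x k ^ 2 := by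
  rw [Finset.mul_sum]
  exact Finset.sum_congr rfl fun k _ => by rw [pd_rpow hψ hx p k]; ring

end Rpow

lemma AU_rpow_eq_AW {n : ℕ} (hn : (n : ℝ) ≠ 2) {ψ : Euc n → ℝ} (hψ : ContDiff ℝ 2 ψ)
    {x : Euc n} (hx : 0 < ψ x) :
    AU n (fun y => ψ y ^ (-((n : ℝ) - 2) / 2)) x = AW n ψ x := by
  set N : ℝ := (n : ℝ)
  have hN2 : N - 2 ≠ 0 := sub_ne_zero.mpr hn
  set p : ℝ := -(N - 2) / 2 with hp
  set s := ψ x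
  have hpd : ∀ i, pd (fun y => ψ y ^ p) x i = p * s ^ (p - 1) * pd ψ x i :=
    pd_rpow ((hψ.differentiable two_ne_zero) x) hx.ne' p
  have E1 : (s ^ p) ^ (-(N + 2) / (N - 2)) = s ^ ((N + 2) / 2) := by
    rw [← Real.rpow_mul hx.le]
    congr 1
    field_simp
    ring
  have E2 : (s ^ p) ^ (-(2 * N) / (N - 2)) = s ^ N := by
    rw [← Real.rpow_mul hx.le]
    congr 1
    field_simp
    ring
  have A1 : s ^ ((N + 2) / 2) * s ^ (p - 1) = s := by
    rw [← Real.rpow_add hx, show (N + 2) / 2 + (p - 1) = 1 by rw [hp]; ring, Real.rpow_one]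
  have A2 : s ^ ((N + 2) / 2) * s ^ (p - 2) = 1 := by
    rw [← Real.rpow_add hx, show (N + 2) / 2 + (p - 2) = 0 by rw [hp]; ring, Real.rpow_zero]
  have A3 : s ^ N * (s ^ (p - 1) * s ^ (p - 1)) = 1 := by
    rw [← Real.rpow_add hx, ← Real.rpow_add hx,
      show N + ((p - 1) + (p - 1)) = 0 by rw [hp]; ring, Real.rpow_zero]
  have c1 : -(2 / (N - 2)) * p = 1 := by rw [hp]; field_simp
  have c2 : (2 * N / (N - 2) ^ 2) * p ^ 2 = N / 2 := by rw [hp]; field_simp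
  have c3 : (2 / (N - 2) ^ 2) * p ^ 2 = 1 / 2 := by rw [hp]; field_simp
  have hp1 : p - 1 = -N / 2 := by rw [hp]; ring
  -- After the chain rule, the powers of `s` cancel by `A1`–`A3` and the coefficients by `c1`–`c3`.
  ext i j
  simp only [AU, AW, Matrix.of_apply]
  rw [hess_rpow hψ hx p i j, hpd i, hpd j, sum_sq_pd_rpow ((hψ.differentiable two_ne_zero) x) hx.ne',
    E1, E2]
  set ai := pd ψ x i
  set aj := pd ψ x j
  set S := ∑ k, (pd ψ x k) ^ 2
  set H := hess ψ x i j
  set d : ℝ := if i = j then 1 else 0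
  linear_combination (-(2 / (N - 2)) * p * (p - 1) * ai * aj) * A2 + (-(2 / (N - 2)) * p * H) * A1
    + ((2 * N / (N - 2) ^ 2) * p ^ 2 * ai * aj - (2 / (N - 2) ^ 2) * p ^ 2 * S * d) * A3
    + ((p - 1) * ai * aj + s * H) * c1 + (ai * aj) * c2 + (-(S * d)) * c3 + (ai * aj) * hp1

section PosCutoff

def posCutoff (ε t : ℝ) : ℝ :=
  ε + (t - ε) * Real.smoothTransition ((t - ε) / ε)

variable {ε : ℝ}

lemma contDiff_posCutoff {k : ℕ∞} : ContDiff ℝ k (posCutoff ε) :=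
  contDiff_const.add ((contDiff_id.sub contDiff_const).mul
    (Real.smoothTransition.contDiff.comp ((contDiff_id.sub contDiff_const).div_const _)))

lemma posCutoff_pos (hε : 0 < ε) (t : ℝ) : 0 < posCutoff ε t := by
  rcases le_or_gt ε t with h | h
  · have := mul_nonneg (sub_nonneg.mpr h) (Real.smoothTransition.nonneg ((t - ε) / ε))
    rw [posCutoff]
    linarith
  · rw [posCutoff, Real.smoothTransition.zero_of_nonpos
      (div_nonpos_of_nonpos_of_nonneg (by linarith) hε.le)]
    linarith

lemma posCutoff_of_le (hε : 0 < ε) {t : ℝ} (ht : 2 * ε ≤ t) : posCutoff ε t = t := by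
  rw [posCutoff, Real.smoothTransition.one_of_one_le (by rw [le_div_iff₀ hε]; linarith)]
  ring

end PosCutoff

lemma exists_contDiff_eventuallyEq_rpow {E : Type*} [NormedAddCommGroup E] [NormedSpace ℝ E]
    {k : ℕ∞} {f : E → ℝ} (hf : ContDiff ℝ k f) {x₀ : E} (hx₀ : 0 < f x₀) (p : ℝ) :
    ∃ g : E → ℝ, ContDiff ℝ k g ∧ g =ᶠ[𝓝 x₀] fun y => f y ^ p := by
  have hε : 0 < f x₀ / 3 := by positivity
  refine ⟨fun y => posCutoff (f x₀ / 3) (f y) ^ p,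
    (contDiff_posCutoff.comp hf).rpow_const_of_ne fun y => (posCutoff_pos hε (f y)).ne', ?_⟩
  filter_upwards [hf.continuous.continuousAt.eventually
    (eventually_gt_nhds (by linarith : 2 * (f x₀ / 3) < f x₀))] with y hy
  rw [posCutoff_of_le hε hy.le]

lemma rpow_rpow_conformal {N : ℝ} (hN : N ≠ 2) {t : ℝ} (ht : 0 ≤ t) :
    (t ^ (-2 / (N - 2))) ^ (-(N - 2) / 2) = t := by
  have : N - 2 ≠ 0 := sub_ne_zero.mpr hN
  rw [← Real.rpow_mul ht, show -2 / (N - 2) * (-(N - 2) / 2) = 1 by field_simp, Real.rpow_one]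

section Touching

variable {n : ℕ} {u : Euc n → ℝ} {x₀ : Euc n}

lemma exists_AU_eq_of_touches_rpow_from_below (hn : 2 < (n : ℝ))
    (hu : ∀ᶠ x in 𝓝 x₀, 0 < u x) {ψ : Euc n → ℝ} (hψ : ContDiff ℝ 2 ψ)
    (hψx₀ : u x₀ ^ (-2 / ((n : ℝ) - 2)) = ψ x₀)
    (hψle : ∀ᶠ x in 𝓝 x₀, ψ x ≤ u x ^ (-2 / ((n : ℝ) - 2))) :
    ∃ φ : Euc n → ℝ, ContDiff ℝ 2 φ ∧ u x₀ = φ x₀ ∧ (∀ᶠ x in 𝓝 x₀, u x ≤ φ x) ∧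
      AU n φ x₀ = AW n ψ x₀ := by
  have hψpos : 0 < ψ x₀ := hψx₀ ▸ Real.rpow_pos_of_pos hu.self_of_nhds _
  obtain ⟨φ, hφ, hφeq⟩ := exists_contDiff_eventuallyEq_rpow hψ hψpos (-((n : ℝ) - 2) / 2)
  refine ⟨φ, hφ, ?_, ?_, by rw [AU_congr hφeq, AU_rpow_eq_AW hn.ne' hψ hψpos]⟩
  · rw [hφeq.self_of_nhds]
    dsimp only
    rw [← hψx₀, rpow_rpow_conformal hn.ne' hu.self_of_nhds.le]
  · filter_upwards [hu, hψle, hφeq, hψ.continuous.continuousAt.eventually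
      (eventually_gt_nhds hψpos)] with x hux hle hφx hψx
    calc u x = (u x ^ (-2 / ((n : ℝ) - 2))) ^ (-((n : ℝ) - 2) / 2) :=
          (rpow_rpow_conformal hn.ne' hux.le).symm
      _ ≤ ψ x ^ (-((n : ℝ) - 2) / 2) :=
          Real.rpow_le_rpow_of_nonpos hψx hle (by apply div_nonpos_of_nonpos_of_nonneg <;> linarith)
      _ = φ x := hφx.symm

lemma exists_AW_eq_of_touches_from_above (hn : 2 < (n : ℝ))
    (hu : ∀ᶠ x in 𝓝 x₀, 0 < u x) {φ : Euc n → ℝ} (hφ : ContDiff ℝ 2 φ)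
    (hφx₀ : u x₀ = φ x₀) (hφle : ∀ᶠ x in 𝓝 x₀, u x ≤ φ x) :
    ∃ ψ : Euc n → ℝ, ContDiff ℝ 2 ψ ∧ u x₀ ^ (-2 / ((n : ℝ) - 2)) = ψ x₀ ∧
      (∀ᶠ x in 𝓝 x₀, ψ x ≤ u x ^ (-2 / ((n : ℝ) - 2))) ∧ AW n ψ x₀ = AU n φ x₀ := by
  have hφpos : 0 < φ x₀ := hφx₀ ▸ hu.self_of_nhds
  obtain ⟨ψ, hψ, hψeq⟩ := exists_contDiff_eventuallyEq_rpow hφ hφpos (-2 / ((n : ℝ) - 2))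
  have hψpos : 0 < ψ x₀ := hψeq.self_of_nhds ▸ Real.rpow_pos_of_pos hφpos _
  refine ⟨ψ, hψ, by rw [hψeq.self_of_nhds, hφx₀], ?_, ?_⟩
  · filter_upwards [hu, hφle, hψeq] with x hux hle hψx
    rw [hψx]
    exact Real.rpow_le_rpow_of_nonpos hux hle
      (div_nonpos_of_nonpos_of_nonneg (by norm_num) (by linarith))
  · rw [← AU_rpow_eq_AW hn.ne' hψ hψpos]
    refine AU_congr ?_
    filter_upwards [hu, hφle, hψeq] with x hux hle hψx
    rw [hψx, rpow_rpow_conformal hn.ne' (hux.le.trans hle)]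

end Touching

theorem stmt17_general (n : ℕ) (hn : 3 ≤ n) (Γ : Set (Fin n → ℝ))
    (Ω : Set (Euc n)) (hΩ : IsOpen Ω) (u : Euc n → ℝ)
    (hpos : ∀ x ∈ Ω, 0 < u x)
    (w : Euc n → ℝ) (hwdef : w = fun x => u x ^ (-(2:ℝ)/((n:ℝ)-2))) :
    (∀ x₀ ∈ Ω, ∀ φ : Euc n → ℝ, ContDiff ℝ 2 φ → u x₀ = φ x₀ →
      (∀ᶠ x in nhds x₀, u x ≤ φ x) →
      ∀ h : (AU n φ x₀).IsHermitian, h.eigenvalues ∉ Γ) ↔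
    (∀ x₀ ∈ Ω, ∀ ψ : Euc n → ℝ, ContDiff ℝ 2 ψ → w x₀ = ψ x₀ →
      (∀ᶠ x in nhds x₀, ψ x ≤ w x) →
      ∀ h : (AW n ψ x₀).IsHermitian, h.eigenvalues ∉ Γ) := by
  subst hwdef
  have hn' : 2 < (n : ℝ) := by exact_mod_cast hn
  have hu_pos (x₀ : Euc n) (hx₀ : x₀ ∈ Ω) : ∀ᶠ x in 𝓝 x₀, 0 < u x :=
    eventually_of_mem (hΩ.mem_nhds hx₀) hpos
  constructor
  · intro H x₀ hx₀ ψ hψ hψx₀ hψle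
    obtain ⟨φ, hφ, hφx₀, hφle, hA⟩ :=
      exists_AU_eq_of_touches_rpow_from_below hn' (hu_pos x₀ hx₀) hψ hψx₀ hψle
    exact hA ▸ H x₀ hx₀ φ hφ hφx₀ hφle
  · intro H x₀ hx₀ φ hφ hφx₀ hφle
    obtain ⟨ψ, hψ, hψx₀, hψle, hA⟩ :=
      exists_AW_eq_of_touches_from_above hn' (hu_pos x₀ hx₀) hφ hφx₀ hφle
    exact hA ▸ H x₀ hx₀ ψ hψ hψx₀ hψle

theorem stmt17 (n : ℕ) (hn : 3 ≤ n) (Γ : Set (Fin n → ℝ))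
    (hopen : IsOpen Γ) (hconv : Convex ℝ Γ)
    (hcone : ∀ lam ∈ Γ, ∀ c : ℝ, 0 < c → c • lam ∈ Γ)
    (hsymm : ∀ lam ∈ Γ, ∀ σ : Equiv.Perm (Fin n), lam ∘ σ ∈ Γ)
    (hΓn : {lam : Fin n → ℝ | ∀ i, 0 < lam i} ⊆ Γ)
    (hΓ1 : Γ ⊆ {lam : Fin n → ℝ | 0 < ∑ i, lam i})
    (Ω : Set (Euc n)) (hΩ : IsOpen Ω) (u : Euc n → ℝ)
    (hu : ContinuousOn u Ω) (hpos : ∀ x ∈ Ω, 0 < u x)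
    (w : Euc n → ℝ) (hwdef : w = fun x => u x ^ (-(2:ℝ)/((n:ℝ)-2))) :
    (∀ x₀ ∈ Ω, ∀ φ : Euc n → ℝ, ContDiff ℝ 2 φ → u x₀ = φ x₀ →
      (∀ᶠ x in nhds x₀, u x ≤ φ x) →
      ∀ h : (AU n φ x₀).IsHermitian, h.eigenvalues ∉ Γ) ↔
    (∀ x₀ ∈ Ω, ∀ ψ : Euc n → ℝ, ContDiff ℝ 2 ψ → w x₀ = ψ x₀ →
      (∀ᶠ x in nhds x₀, ψ x ≤ w x) →
      ∀ h : (AW n ψ x₀).IsHermitian, h.eigenvalues ∉ Γ) :=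
  stmt17_general n hn Γ Ω hΩ u hpos w hwdef
end
end
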